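/- Let A_i ∈ ℝ^{n×p} for i ∈ ℕ, θ*, θ₀ ∈ ℝ^p, ε > 0, and for k ≥ 1 let θ_k be the minimizer over θ of ½ Σ_{i=0}^{k-1} ‖A_i(θ − θ*)‖² + (ε/2)‖θ − θ_{k-1}‖²; write θ̃_k = θ_k − θ* and G_k = Σ_{i=0}^{k-1} A_i^⊤A_i. Suppose there are T_s ∈ ℕ with T_s ≥ 1 and δ, β > 0 such that δ I_p ⪯ G_k for all k ≥ T_s, G_k ⪯ β I_p for all k, √β > √δ, and ε < δ√δ/(√β − √δ). Then with γ := (ε√β)/(ε√δ + δ√δ) it holds that γ < 1 and, for all k ≥ T_s, √(Σ_{i=0}^{k} ‖A_i θ̃_k‖²) ≤ γ √(Σ_{i=0}^{k-1} ‖A_i θ̃_{k-1}‖²). -/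

import Mathlib

open scoped Matrix

set_option maxHeartbeats 1000000

private lemma quad_aux (a b : ℝ) (hb : 0 ≤ b) (h : ∀ t : ℝ, 0 ≤ a * t + b * t ^ 2) :
    a = 0 := by
  by_contra ha
  have hb1 : (0:ℝ) < b + 1 := by linarith
  have h1 := h (-a / (b + 1))
  have ha2 : 0 < a ^ 2 := by positivity
  rw [div_pow] at h1
  have h2 : 0 ≤ (a * (-a / (b + 1)) + b * ((-a) ^ 2 / (b + 1) ^ 2)) * (b + 1) ^ 2 :=
    mul_nonneg h1 (by positivity)
  have h3 : (a * (-a / (b + 1)) + b * ((-a) ^ 2 / (b + 1) ^ 2)) * (b + 1) ^ 2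
      = -a ^ 2 * (b + 1) + b * a ^ 2 := by
    field_simp
  nlinarith

private lemma norm_toEuclideanLin_sq (n p : ℕ) (A : Matrix (Fin n) (Fin p) ℝ)
    (x : EuclideanSpace ℝ (Fin p)) :
    ‖Matrix.toEuclideanLin A x‖ ^ 2
      = (WithLp.equiv 2 _ x) ⬝ᵥ ((Aᵀ * A).mulVec (WithLp.equiv 2 _ x)) := by
  rw [← real_inner_self_eq_norm_sq]
  rw [Matrix.toEuclideanLin_apply, PiLp.inner_apply]
  simp only [RCLike.inner_apply, conj_trivial]
  rw [← Matrix.mulVec_mulVec, Matrix.dotProduct_mulVec, Matrix.vecMul_transpose]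
  rfl

private lemma norm_sq_eq_dot (p : ℕ) (x : EuclideanSpace ℝ (Fin p)) :
    ‖x‖ ^ 2 = (WithLp.equiv 2 _ x) ⬝ᵥ (WithLp.equiv 2 _ x) := by
  rw [← real_inner_self_eq_norm_sq, PiLp.inner_apply]
  simp only [RCLike.inner_apply, conj_trivial]
  rfl

private lemma sum_norm_sq_eq (n p : ℕ) (A : ℕ → Matrix (Fin n) (Fin p) ℝ) (k : ℕ)
    (x : EuclideanSpace ℝ (Fin p)) :
    ∑ i ∈ Finset.range k, ‖Matrix.toEuclideanLin (A i) x‖ ^ 2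
      = (WithLp.equiv 2 _ x) ⬝ᵥ
          ((∑ i ∈ Finset.range k, (A i)ᵀ * A i).mulVec (WithLp.equiv 2 _ x)) := by
  rw [Finset.sum_congr rfl fun i _ => norm_toEuclideanLin_sq n p (A i) x]
  simp only [dotProduct, Matrix.mulVec, Finset.sum_apply, Matrix.sum_apply,
    Finset.sum_mul, Finset.mul_sum]
  rw [Finset.sum_comm]
  exact Finset.sum_congr rfl fun y _ => Finset.sum_comm

private lemma lower_bound (n p : ℕ) (A : ℕ → Matrix (Fin n) (Fin p) ℝ) (k : ℕ) (δ : ℝ)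
    (h : ((∑ i ∈ Finset.range k, (A i)ᵀ * A i)
        - δ • (1 : Matrix (Fin p) (Fin p) ℝ)).PosSemidef)
    (x : EuclideanSpace ℝ (Fin p)) :
    δ * ‖x‖ ^ 2 ≤ ∑ i ∈ Finset.range k, ‖Matrix.toEuclideanLin (A i) x‖ ^ 2 := by
  have h0 := h.dotProduct_mulVec_nonneg (WithLp.equiv 2 _ x)
  simp only [star_trivial, Matrix.sub_mulVec, dotProduct_sub,
    Matrix.smul_mulVec, Matrix.one_mulVec, dotProduct_smul, smul_eq_mul] at h0
  rw [sum_norm_sq_eq, norm_sq_eq_dot]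
  linarith

private lemma upper_bound (n p : ℕ) (A : ℕ → Matrix (Fin n) (Fin p) ℝ) (k : ℕ) (β : ℝ)
    (h : (β • (1 : Matrix (Fin p) (Fin p) ℝ)
        - ∑ i ∈ Finset.range k, (A i)ᵀ * A i).PosSemidef)
    (x : EuclideanSpace ℝ (Fin p)) :
    ∑ i ∈ Finset.range k, ‖Matrix.toEuclideanLin (A i) x‖ ^ 2 ≤ β * ‖x‖ ^ 2 := by
  have h0 := h.dotProduct_mulVec_nonneg (WithLp.equiv 2 _ x)
  simp only [star_trivial, Matrix.sub_mulVec, dotProduct_sub,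
    Matrix.smul_mulVec, Matrix.one_mulVec, dotProduct_smul, smul_eq_mul] at h0
  rw [sum_norm_sq_eq, norm_sq_eq_dot]
  linarith

/-- Lifted-input contraction of the RPL update (Lemma 1, second part).
Under sufficient excitation `δI ⪯ G_k` (for `k ≥ T_s`), the uniform bound `G_k ⪯ βI`,
and the step-size condition `ε < δ√δ/(√β − √δ)`, the lifted input error
`‖Φ_{k+1} θ̃_k‖ = √(Σ_{i≤k} ‖A_i θ̃_k‖²)` contracts with rate
`γ = ε√β/(ε√δ + δ√δ) < 1` for all `k ≥ T_s`. -/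
theorem rpl_lifted_input_contraction
    (n p : ℕ) (A : ℕ → Matrix (Fin n) (Fin p) ℝ)
    (θstar θ0 : EuclideanSpace ℝ (Fin p)) (ε : ℝ) (hε : 0 < ε)
    (θ : ℕ → EuclideanSpace ℝ (Fin p)) (hθ0 : θ 0 = θ0)
    (hmin : ∀ k, 1 ≤ k → ∀ θ' : EuclideanSpace ℝ (Fin p),
      (1 / 2) * ∑ i ∈ Finset.range k, ‖Matrix.toEuclideanLin (A i) (θ k - θstar)‖ ^ 2
          + (ε / 2) * ‖θ k - θ (k - 1)‖ ^ 2 ≤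
        (1 / 2) * ∑ i ∈ Finset.range k, ‖Matrix.toEuclideanLin (A i) (θ' - θstar)‖ ^ 2
          + (ε / 2) * ‖θ' - θ (k - 1)‖ ^ 2)
    (Ts : ℕ) (hTs : 1 ≤ Ts) (δ β : ℝ) (hδ : 0 < δ) (hβ : 0 < β)
    (hSE : ∀ k, Ts ≤ k →
      ((∑ i ∈ Finset.range k, (A i)ᵀ * A i) - δ • (1 : Matrix (Fin p) (Fin p) ℝ)).PosSemidef)
    (hUB : ∀ k : ℕ,
      (β • (1 : Matrix (Fin p) (Fin p) ℝ) - ∑ i ∈ Finset.range k, (A i)ᵀ * A i).PosSemidef)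
    (hβδ : Real.sqrt δ < Real.sqrt β)
    (hεsmall : ε < δ * Real.sqrt δ / (Real.sqrt β - Real.sqrt δ)) :
    ε * Real.sqrt β / (ε * Real.sqrt δ + δ * Real.sqrt δ) < 1 ∧
      ∀ k, Ts ≤ k →
        Real.sqrt (∑ i ∈ Finset.range (k + 1),
            ‖Matrix.toEuclideanLin (A i) (θ k - θstar)‖ ^ 2) ≤
          (ε * Real.sqrt β / (ε * Real.sqrt δ + δ * Real.sqrt δ)) *
            Real.sqrt (∑ i ∈ Finset.range k,
              ‖Matrix.toEuclideanLin (A i) (θ (k - 1) - θstar)‖ ^ 2) := by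
  set sδ := Real.sqrt δ with hsδdef
  set sβ := Real.sqrt β with hsβdef
  have hsδ : 0 < sδ := Real.sqrt_pos.mpr hδ
  have hsβ : 0 < sβ := Real.sqrt_pos.mpr hβ
  have hc : 0 < ε * sδ + δ * sδ := by positivity
  have hsub : 0 < sβ - sδ := by linarith
  have hεβδ : ε * (sβ - sδ) < δ * sδ := by
    have := (lt_div_iff₀ hsub).mp hεsmall
    linarith
  constructor
  · rw [div_lt_one hc]
    nlinarith
  · intro k hk
    have hk1 : 1 ≤ k := le_trans hTs hk
    set u : EuclideanSpace ℝ (Fin p) := θ k - θstar with hu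
    set w : EuclideanSpace ℝ (Fin p) := θ (k - 1) - θstar with hw
    set d : EuclideanSpace ℝ (Fin p) := θ k - θ (k - 1) with hd
    set Q : ℝ := ∑ i ∈ Finset.range k, ‖Matrix.toEuclideanLin (A i) u‖ ^ 2 with hQ
    have hQnn : 0 ≤ Q := Finset.sum_nonneg fun i _ => by positivity
    -- first-order condition in direction u
    have key : Q + ε * (inner ℝ d u : ℝ) = 0 := by
      apply quad_aux _ (Q / 2 + ε / 2 * ‖u‖ ^ 2) (by positivity)
      intro t
      have hm := hmin k hk1 (θ k + t • u)
      have e1 : θ k + t • u - θstar = (1 + t) • u := by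
        rw [hu]; module
      have e2 : θ k + t • u - θ (k - 1) = d + t • u := by
        rw [hd]; module
      have e3 : ∀ i, ‖Matrix.toEuclideanLin (A i) ((1 + t) • u)‖ ^ 2
          = (1 + t) ^ 2 * ‖Matrix.toEuclideanLin (A i) u‖ ^ 2 := by
        intro i
        rw [map_smul, norm_smul]
        simp [mul_pow, sq_abs]
      have e4 : ‖d + t • u‖ ^ 2
          = ‖d‖ ^ 2 + 2 * (t * (inner ℝ d u : ℝ)) + t ^ 2 * ‖u‖ ^ 2 := by
        rw [@norm_add_sq_real, real_inner_smul_right, norm_smul]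
        simp [mul_pow, sq_abs]
      rw [e1, e2, e4] at hm
      simp only [e3, ← Finset.mul_sum, ← hQ] at hm
      nlinarith [hm]
    -- rewrite inner d u
    have hdu : d = u - w := by rw [hd, hu, hw]; module
    have hinner : (inner ℝ d u : ℝ) = ‖u‖ ^ 2 - (inner ℝ w u : ℝ) := by
      rw [hdu, inner_sub_left, real_inner_self_eq_norm_sq]
    have hQeq : Q + ε * ‖u‖ ^ 2 = ε * (inner ℝ w u : ℝ) := by
      rw [hinner] at key; linarith
    -- sufficient excitation at u and w
    have hQlow : δ * ‖u‖ ^ 2 ≤ Q := lower_bound n p A k δ (hSE k hk) u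
    have hinner_le : (inner ℝ w u : ℝ) ≤ ‖w‖ * ‖u‖ := real_inner_le_norm w u
    have h1 : (δ + ε) * ‖u‖ ≤ ε * ‖w‖ := by
      rcases eq_or_lt_of_le (norm_nonneg u) with h0 | h0
      · rw [← h0, mul_zero]
        positivity
      · have : (δ + ε) * ‖u‖ ^ 2 ≤ ε * (‖w‖ * ‖u‖) := by
          calc (δ + ε) * ‖u‖ ^ 2 = δ * ‖u‖ ^ 2 + ε * ‖u‖ ^ 2 := by ring
            _ ≤ Q + ε * ‖u‖ ^ 2 := by linarith
            _ = ε * (inner ℝ w u : ℝ) := hQeq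
            _ ≤ ε * (‖w‖ * ‖u‖) := by
                exact mul_le_mul_of_nonneg_left hinner_le hε.le
        nlinarith
    -- bounds on the lifted sums
    set R : ℝ := ∑ i ∈ Finset.range k, ‖Matrix.toEuclideanLin (A i) w‖ ^ 2 with hR
    set S : ℝ := ∑ i ∈ Finset.range (k + 1), ‖Matrix.toEuclideanLin (A i) u‖ ^ 2 with hS
    have hRnn : 0 ≤ R := Finset.sum_nonneg fun i _ => by positivity
    have hSnn : 0 ≤ S := Finset.sum_nonneg fun i _ => by positivity
    have hRlow : δ * ‖w‖ ^ 2 ≤ R := lower_bound n p A k δ (hSE k hk) w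
    have hSup : S ≤ β * ‖u‖ ^ 2 := upper_bound n p A (k + 1) β (hUB (k + 1)) u
    have hRsqrt : sδ * ‖w‖ ≤ Real.sqrt R := by
      have : Real.sqrt (δ * ‖w‖ ^ 2) ≤ Real.sqrt R := Real.sqrt_le_sqrt hRlow
      rwa [Real.sqrt_mul hδ.le, Real.sqrt_sq (norm_nonneg w)] at this
    have hSsqrt : Real.sqrt S ≤ sβ * ‖u‖ := by
      have : Real.sqrt S ≤ Real.sqrt (β * ‖u‖ ^ 2) := Real.sqrt_le_sqrt hSup
      rwa [Real.sqrt_mul hβ.le, Real.sqrt_sq (norm_nonneg u)] at this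
    -- combine
    rw [div_mul_eq_mul_div, le_div_iff₀ hc]
    have hRnn' : 0 ≤ Real.sqrt R := Real.sqrt_nonneg R
    nlinarith [mul_le_mul_of_nonneg_right hSsqrt hc.le,
      mul_le_mul_of_nonneg_left h1 (mul_nonneg hsβ.le hsδ.le),
      mul_le_mul_of_nonneg_left hRsqrt (mul_nonneg hε.le hsβ.le)]
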